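/- Let (X,μ) and (I,ν) be connected weighted graphs with bounded row sums, and suppose there exists a local isomorphism f : X → I, i.e. ∑_{z ∈ f^{-1}(i)} μ(x,z) = ν(f(x), i) for all x ∈ X and i ∈ I. Then R_μ ≥ R_ν, where R_μ := 1/limsup_{n→∞}(μ^{(n)}(x,y))^{1/n} and R_ν := 1/limsup_{n→∞}(ν^{(n)}(i,j))^{1/n} are the convergence parameters (independent of the base points by connectedness). -/

import Mathlib

open Filter MeasureTheory ProbabilityTheory
open scoped ENNReal NNReal

/-- `n`-step weights (matrix powers) of a weight kernel `μ` on a countable set. -/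
noncomputable def matPow {X : Type*} [DecidableEq X] (μ : X → X → ℝ≥0∞) :
    ℕ → X → X → ℝ≥0∞
  | 0, x, y => if x = y then 1 else 0
  | n + 1, x, y => ∑' z, matPow μ n x z * μ z y

/-- `(X, μ)` has bounded row sums. -/
def bddRows {X : Type*} (μ : X → X → ℝ≥0∞) : Prop :=
  ∃ K : ℝ≥0∞, K ≠ ⊤ ∧ ∀ x, ∑' y, μ x y ≤ K

/-- `(X, μ)` is connected. -/
def connectedW {X : Type*} [DecidableEq X] (μ : X → X → ℝ≥0∞) : Prop :=
  ∀ x y, ∃ n, 0 < n ∧ 0 < matPow μ n x y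

/-- `limsup_n (μ^{(n)}(x,y))^{1/n}`, the reciprocal of the convergence parameter. -/
noncomputable def lsRoot {X : Type*} [DecidableEq X] (μ : X → X → ℝ≥0∞) (x y : X) : ℝ≥0∞ :=
  Filter.limsup (fun n : ℕ => matPow μ n x y ^ (n : ℝ)⁻¹) Filter.atTop

/-- The convergence parameter `R = 1 / limsup_n (μ^{(n)}(x,y))^{1/n}`. -/
noncomputable def convR {X : Type*} [DecidableEq X] (μ : X → X → ℝ≥0∞) (x y : X) : ℝ≥0∞ :=
  (lsRoot μ x y)⁻¹

open Classical in
/-- Restriction of a weight kernel to a subset (extended by `0`). -/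
noncomputable def restrictW {X : Type*} (μ : X → X → ℝ≥0∞) (A : Set X) : X → X → ℝ≥0∞ :=
  fun x y => if x ∈ A ∧ y ∈ A then μ x y else 0
/-- `f : X → I` is a local isomorphism of `(X, μ)` on `(I, ν)`:
`∑_{z ∈ f⁻¹(i)} μ(x, z) = ν(f x, i)` for all `x, i`. -/
def IsLocalIsom {X I : Type*} (μ : X → X → ℝ≥0∞) (ν : I → I → ℝ≥0∞) (f : X → I) : Prop :=
  ∀ (x : X) (i : I), ∑' z : {z : X // f z = i}, μ x z.1 = ν (f x) i

/-! A local isomorphism lifts paths: `ν^{(n)}(f x, j)` is the sum of `μ^{(n)}(x, z)` over the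
fibre `f⁻¹(j)`, so `μ^{(n)}(x, y) ≤ ν^{(n)}(f x, f y)` and the limsup of `n`-th roots for `μ`
at `(x, y)` is at most the one for `ν` at `(f x, f y)`. Connectedness of `ν` gives
`ν^{(k)}(i, i') ν^{(n)}(i', j') ν^{(l)}(j', j) ≤ ν^{(k+n+l)}(i, j)` with fixed positive outer
factors, and a fixed positive factor and a fixed shift of the index do not change the limsup of
`n`-th roots, so for `ν` it does not depend on the base points. -/

namespace ENNReal

theorem tendsto_rpow_inv_natCast_nhds_one {d : ℝ≥0∞} (h0 : d ≠ 0) (htop : d ≠ ⊤) :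
    Tendsto (fun n : ℕ => d ^ (n : ℝ)⁻¹) atTop (nhds 1) := by
  lift d to ℝ≥0 using htop
  have h0' : d ≠ 0 := by exact_mod_cast h0
  simp_rw [← ENNReal.coe_rpow_of_ne_zero h0', ← ENNReal.coe_one, ENNReal.tendsto_coe]
  rw [← NNReal.tendsto_coe]
  have hcont : ContinuousAt (fun t : ℝ => (d : ℝ) ^ t) 0 :=
    Real.continuousAt_const_rpow (NNReal.coe_ne_zero.2 h0')
  simpa [Function.comp_def] using
    hcont.tendsto.comp (tendsto_inv_atTop_zero.comp tendsto_natCast_atTop_atTop)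

theorem le_limsup_rpow_inv_of_frequently {b : ℕ → ℝ≥0∞} {d r : ℝ≥0∞} (hd : d ≠ 0)
    (h : ∃ᶠ n in atTop, d * r ^ n ≤ b n) :
    r ≤ limsup (fun n : ℕ => b n ^ (n : ℝ)⁻¹) atTop := by
  -- `d` may be `⊤`, while `d' ^ n⁻¹ → 1` needs a finite positive base
  set d' := min d 1
  have hd'0 : d' ≠ 0 := by simp [d', hd]
  have hd'top : d' ≠ ⊤ := ne_top_of_le_ne_top one_ne_top (min_le_right _ _)
  have hlim : Tendsto (fun n : ℕ => d' ^ (n : ℝ)⁻¹ * r) atTop (nhds r) := by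
    simpa using ENNReal.Tendsto.mul_const (tendsto_rpow_inv_natCast_nhds_one hd'0 hd'top)
      (Or.inl one_ne_zero)
  refine le_of_forall_lt_imp_le_of_dense fun s hs => ?_
  refine le_limsup_of_frequently_le ?_ (by isBoundedDefault)
  refine ((h.and_eventually (hlim.eventually (lt_mem_nhds hs))).and_eventually
    (eventually_ge_atTop 1)).mono ?_
  rintro n ⟨⟨hb, hs⟩, hn⟩
  have hn' : (0 : ℝ) < n := by exact_mod_cast hn
  calc s ≤ d' ^ (n : ℝ)⁻¹ * r := hs.le
    _ = (d' * r ^ n) ^ (n : ℝ)⁻¹ := by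
      rw [ENNReal.mul_rpow_of_nonneg _ _ (inv_nonneg.2 hn'.le), ← ENNReal.rpow_natCast,
        ENNReal.rpow_rpow_inv hn'.ne']
    _ ≤ b n ^ (n : ℝ)⁻¹ := by
      gcongr
      exact (mul_le_mul_left (min_le_left _ _) _).trans hb

theorem limsup_rpow_inv_le_of_mul_le {a b : ℕ → ℝ≥0∞} {c : ℝ≥0∞} (hc : c ≠ 0) (m : ℕ)
    (h : ∀ n, c * a n ≤ b (n + m)) :
    limsup (fun n : ℕ => a n ^ (n : ℝ)⁻¹) atTop ≤ limsup (fun n : ℕ => b n ^ (n : ℝ)⁻¹) atTop := by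
  refine le_of_forall_lt_imp_le_of_dense fun r hr => ?_
  rcases eq_or_ne r 0 with rfl | hr0
  · exact zero_le
  have hrtop : r ≠ ⊤ := ne_top_of_lt hr
  have hfreq : ∃ᶠ n in atTop, c * (r ^ m)⁻¹ * r ^ (n + m) ≤ b (n + m) := by
    refine ((frequently_lt_of_lt_limsup (by isBoundedDefault) hr).and_eventually
      (eventually_ge_atTop 1)).mono fun n ⟨hn, hn1⟩ => ?_
    have hn' : (0 : ℝ) < n := by exact_mod_cast hn1
    rw [lt_rpow_inv_iff hn', rpow_natCast] at hn
    rw [pow_add, mul_assoc, mul_left_comm _ (r ^ n),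
      ENNReal.inv_mul_cancel (pow_ne_zero m hr0) (pow_ne_top hrtop), mul_one]
    exact (mul_le_mul_right hn.le c).trans (h n)
  refine le_limsup_rpow_inv_of_frequently (d := c * (r ^ m)⁻¹) ?_ ?_
  · exact mul_ne_zero hc (ENNReal.inv_ne_zero.2 (pow_ne_top hrtop))
  · rw [← map_add_atTop_eq_nat m, frequently_map]
    exact hfreq

end ENNReal

section matPow

variable {X : Type*} [DecidableEq X] (μ : X → X → ℝ≥0∞)

theorem matPow_zero (x y : X) : matPow μ 0 x y = if x = y then 1 else 0 := rfl

theorem matPow_succ (n : ℕ) (x y : X) : matPow μ (n + 1) x y = ∑' z, matPow μ n x z * μ z y :=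
  rfl

theorem matPow_add (m n : ℕ) (x y : X) :
    matPow μ (m + n) x y = ∑' z, matPow μ m x z * matPow μ n z y := by
  induction n generalizing y with
  | zero => simp [matPow_zero]
  | succ n ih =>
    calc matPow μ (m + n + 1) x y = ∑' w, (∑' z, matPow μ m x z * matPow μ n z w) * μ w y := by
          simp only [matPow_succ, ih]
      _ = ∑' z, matPow μ m x z * ∑' w, matPow μ n z w * μ w y := by
          simp only [← ENNReal.tsum_mul_right, ← ENNReal.tsum_mul_left, mul_assoc]
          exact ENNReal.tsum_comm
      _ = ∑' z, matPow μ m x z * matPow μ (n + 1) z y := by simp only [matPow_succ]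

theorem matPow_mul_mul_le (k n l : ℕ) (x x' y' y : X) :
    matPow μ k x x' * matPow μ n x' y' * matPow μ l y' y ≤ matPow μ (k + n + l) x y := by
  calc matPow μ k x x' * matPow μ n x' y' * matPow μ l y' y
      ≤ matPow μ (k + n) x y' * matPow μ l y' y := by
        gcongr; rw [matPow_add]; exact ENNReal.le_tsum x'
    _ ≤ matPow μ (k + n + l) x y := by rw [matPow_add μ (k + n)]; exact ENNReal.le_tsum y'

theorem lsRoot_le_of_connectedW (hc : connectedW μ) (x y x' y' : X) :
    lsRoot μ x' y' ≤ lsRoot μ x y := by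
  obtain ⟨k, -, hk⟩ := hc x x'
  obtain ⟨l, -, hl⟩ := hc y' y
  refine ENNReal.limsup_rpow_inv_le_of_mul_le (c := matPow μ k x x' * matPow μ l y' y)
    (mul_ne_zero hk.ne' hl.ne') (k + l) fun n => ?_
  calc matPow μ k x x' * matPow μ l y' y * matPow μ n x' y'
      = matPow μ k x x' * matPow μ n x' y' * matPow μ l y' y := by ring
    _ ≤ matPow μ (k + n + l) x y := matPow_mul_mul_le μ k n l x x' y' y
    _ = matPow μ (n + (k + l)) x y := by rw [show k + n + l = n + (k + l) by omega]

end matPow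

namespace IsLocalIsom

variable {X I : Type*} [DecidableEq X] [DecidableEq I] {μ : X → X → ℝ≥0∞}
  {ν : I → I → ℝ≥0∞} {f : X → I}

theorem matPow_eq_tsum_fiber (hf : IsLocalIsom μ ν f) (n : ℕ) (x : X) (j : I) :
    matPow ν n (f x) j = ∑' z : {z : X // f z = j}, matPow μ n x z := by
  induction n generalizing j with
  | zero =>
    refine Eq.trans ?_ (tsum_subtype {z | f z = j} (matPow μ 0 x)).symm
    simp only [matPow_zero, Set.indicator_apply]
    rw [tsum_eq_single x fun z hz => by simp [Ne.symm hz]]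
    simp
  | succ n ih =>
    calc matPow ν (n + 1) (f x) j
        = ∑' i, ∑' z : {z : X // f z = i}, matPow μ n x z * ν (f z) j := by
          simp only [matPow_succ, ih, ← ENNReal.tsum_mul_right]
          exact tsum_congr fun i => tsum_congr fun z => by rw [z.2]
      _ = ∑' z, matPow μ n x z * ν (f z) j :=
          ENNReal.tsum_fiberwise (fun z => matPow μ n x z * ν (f z) j) f
      _ = ∑' w : {w : X // f w = j}, ∑' z, matPow μ n x z * μ z w := by
          simp only [← hf _ j, ← ENNReal.tsum_mul_left]
          exact ENNReal.tsum_comm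
      _ = ∑' w : {w : X // f w = j}, matPow μ (n + 1) x w := by simp only [matPow_succ]

theorem matPow_le (hf : IsLocalIsom μ ν f) (n : ℕ) (x y : X) :
    matPow μ n x y ≤ matPow ν n (f x) (f y) := by
  rw [hf.matPow_eq_tsum_fiber]
  exact ENNReal.le_tsum (⟨y, rfl⟩ : {z : X // f z = f y})

theorem lsRoot_le (hf : IsLocalIsom μ ν f) (x y : X) : lsRoot μ x y ≤ lsRoot ν (f x) (f y) :=
  limsup_le_limsup (.of_forall fun n => ENNReal.rpow_le_rpow (hf.matPow_le n x y) (by positivity))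

end IsLocalIsom

theorem localIsom_convR_le_general
    {X I : Type*} [DecidableEq X] [DecidableEq I]
    (μ : X → X → ℝ≥0∞) (ν : I → I → ℝ≥0∞)
    (hcν : connectedW ν)
    (f : X → I) (hf : IsLocalIsom μ ν f) :
    ∀ (x y : X) (i j : I), convR ν i j ≤ convR μ x y := fun x y i j =>
  ENNReal.inv_le_inv.2 ((hf.lsRoot_le x y).trans (lsRoot_le_of_connectedW ν hcν i j (f x) (f y)))

/-- if there is a local isomorphism of the connected weighted graph `(X, μ)`
on the connected weighted graph `(I, ν)`, then `R_μ ≥ R_ν`. -/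
theorem localIsom_convR_le
    {X I : Type*} [Countable X] [DecidableEq X] [Countable I] [DecidableEq I]
    (μ : X → X → ℝ≥0∞) (ν : I → I → ℝ≥0∞)
    (hμ : bddRows μ) (hν : bddRows ν)
    (hcμ : connectedW μ) (hcν : connectedW ν)
    (f : X → I) (hf : IsLocalIsom μ ν f) :
    ∀ (x y : X) (i j : I), convR ν i j ≤ convR μ x y :=
  localIsom_convR_le_general μ ν hcν f hf
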